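/- Let H be a finite connected graph and v_0, v_1 two distinct vertices of H. Let C = sum over all walks omega from v_0 to v_1 of length at least 1 whose intermediate vertices avoid both v_0 and v_1, of sigma_{v_0} * p_H(omega), and let R = sum over all closed walks omega from v_0 to v_0 (including the trivial walk) that do not visit v_1, of sigma_{v_0}^{-1} * p_H(omega). Then both sums are finite and C * R = 1. -/

import Mathlib

/-!
Cutting a walk from `v₀` that reaches `v₁` only at its end at its last visit to `v₀` is a
bijection onto pairs (closed walk at `v₀` avoiding `v₁`, walk counted in `C`), and the weight is
multiplicative. Hence `R * C` is the total weight of walks from `v₀` stopped on hitting `v₁`, that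
is, the probability that simple random walk from `v₀` ever hits `v₁`. As a function of the
starting point this probability is at most `1` (truncate by length), equals `1` at `v₁` and is
harmonic elsewhere, so by the minimum principle on a finite connected graph it is identically `1`.
-/

open scoped ENNReal

variable {V : Type*}

noncomputable def wgt (G : SimpleGraph V) [G.LocallyFinite] {v u : V} (p : G.Walk v u) : ℝ≥0∞ :=
  (p.support.dropLast.map fun x => ((G.degree x : ℝ≥0∞))⁻¹).prod

open SimpleGraph

section Weight

variable {G : SimpleGraph V} [G.LocallyFinite]

@[simp]
lemma wgt_nil {u : V} : wgt G (Walk.nil : G.Walk u u) = 1 := by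
  simp [wgt]

@[simp]
lemma wgt_cons {u v w : V} (h : G.Adj u v) (p : G.Walk v w) :
    wgt G (p.cons h) = (G.degree u : ℝ≥0∞)⁻¹ * wgt G p := by
  simp [wgt, List.dropLast_cons_of_ne_nil p.support_ne_nil]

lemma wgt_append {u v w : V} (p : G.Walk u v) (q : G.Walk v w) :
    wgt G (p.append q) = wgt G p * wgt G q := by
  induction p with
  | nil => simp
  | cons h p ih => rw [Walk.cons_append, wgt_cons, wgt_cons, ih, mul_assoc]

end Weight

namespace SimpleGraph.Walk

variable {G : SimpleGraph V} {u v w : V}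

lemma dropLast_support_append (p : G.Walk u v) (q : G.Walk v w) :
    (p.append q).support.dropLast = p.support.dropLast ++ q.support.dropLast := by
  rw [support_append_eq_support_dropLast_append, List.dropLast_append_of_ne_nil q.support_ne_nil]

lemma dropLast_support_cons (h : G.Adj u v) (p : G.Walk v w) :
    (p.cons h).support.dropLast = u :: p.support.dropLast := by
  rw [support_cons, List.dropLast_cons_of_ne_nil p.support_ne_nil]

lemma mem_support_iff_mem_dropLast_support {x : V} (p : G.Walk u v) (hx : x ≠ v) :
    x ∈ p.support ↔ x ∈ p.support.dropLast := by
  conv_lhs => rw [← dropLast_support_concat p]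
  simp only [List.mem_append, List.mem_singleton, hx, or_false]

lemma notMem_dropLast_support_append_iff {b : V} (p : G.Walk u v) (q : G.Walk v w) (hb : b ≠ v) :
    b ∉ (p.append q).support.dropLast ↔ b ∉ p.support ∧ b ∉ q.support.dropLast := by
  rw [dropLast_support_append, mem_support_iff_mem_dropLast_support p hb, List.mem_append, not_or]

lemma notMem_support_tail_and_dropLast_iff (huw : u ≠ w) (τ : G.Walk u w) :
    u ∉ τ.support.tail ∧ w ∉ τ.support.dropLast ↔
      1 ≤ τ.length ∧ ∀ x ∈ τ.support.tail.dropLast, x ≠ u ∧ x ≠ w := by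
  cases τ with
  | nil => exact absurd rfl huw
  | cons h p =>
    rw [dropLast_support_cons, support_cons, List.tail_cons,
      mem_support_iff_mem_dropLast_support p huw]
    simp [huw.symm, forall_and, List.forall_mem_ne']

lemma append_inj_of_notMem_support_tail {σ₁ σ₂ : G.Walk u v} {τ₁ τ₂ : G.Walk v w}
    (h₁ : v ∉ τ₁.support.tail) (h₂ : v ∉ τ₂.support.tail) (h : σ₁.append τ₁ = σ₂.append τ₂) :
    σ₁ = σ₂ ∧ τ₁ = τ₂ := by
  induction σ₁ with
  | nil =>
    cases σ₂ with
    | nil => exact ⟨rfl, h⟩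
    | cons hadj σ₂ =>
      subst h
      simp at h₁
  | cons hadj σ₁ ih =>
    cases σ₂ with
    | nil =>
      subst h
      simp at h₂
    | cons hadj' σ₂ =>
      simp only [cons_append, cons.injEq] at h
      obtain ⟨rfl, h⟩ := h
      obtain ⟨rfl, rfl⟩ := ih h₁ h₂ (heq_iff_eq.1 h)
      exact ⟨rfl, rfl⟩

lemma exists_append_notMem_support_tail (ω : G.Walk u w) (hv : v ∈ ω.support) :
    ∃ (σ : G.Walk u v) (τ : G.Walk v w), v ∉ τ.support.tail ∧ σ.append τ = ω := by
  induction ω with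
  | nil =>
    rw [mem_support_nil_iff] at hv
    subst hv
    exact ⟨nil, nil, by simp, rfl⟩
  | cons hadj ω ih =>
    by_cases hω : v ∈ ω.support
    · obtain ⟨σ, τ, hτ, rfl⟩ := ih hω
      exact ⟨cons hadj σ, τ, hτ, rfl⟩
    · obtain rfl : v = _ := by simpa [hω] using hv
      exact ⟨nil, cons hadj ω, by simpa using hω, rfl⟩

end SimpleGraph.Walk

theorem SimpleGraph.Adj.apply_le_of_forall_le_of_harmonic {G : SimpleGraph V} [G.LocallyFinite]
    {f : V → ℝ≥0∞} {x y : V} (hxy : G.Adj x y) (hfx : f x ≠ ⊤) (hmin : ∀ z, f x ≤ f z)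
    (harm : f x = (G.degree x : ℝ≥0∞)⁻¹ * ∑ w ∈ G.neighborFinset x, f w) : f y ≤ f x := by
  classical
  have hy : y ∈ G.neighborFinset x := (G.mem_neighborFinset x y).2 hxy
  have hdeg : (G.degree x : ℝ≥0∞) ≠ 0 := by
    exact_mod_cast ((G.degree_pos_iff_exists_adj x).2 ⟨y, hxy⟩).ne'
  have hsum : ∑ w ∈ G.neighborFinset x, f w = ∑ _w ∈ G.neighborFinset x, f x := by
    rw [Finset.sum_const, card_neighborFinset_eq_degree, nsmul_eq_mul, harm, ← mul_assoc,
      ENNReal.mul_inv_cancel hdeg (ENNReal.natCast_ne_top _), one_mul]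
  set s := (G.neighborFinset x).erase y
  have : f y + ∑ _w ∈ s, f x ≤ f x + ∑ _w ∈ s, f x := calc
    f y + ∑ _w ∈ s, f x ≤ f y + ∑ w ∈ s, f w := by gcongr with w; exact hmin w
    _ = f x + ∑ _w ∈ s, f x := by
      rw [Finset.add_sum_erase _ _ hy, hsum, Finset.add_sum_erase _ (fun _ => f x) hy]
  exact (ENNReal.add_le_add_iff_right (ENNReal.sum_ne_top.2 fun _ _ => hfx)).1 this

theorem SimpleGraph.Connected.apply_le_of_harmonic_off [Fintype V] {G : SimpleGraph V}
    [G.LocallyFinite] (hG : G.Connected) {f : V → ℝ≥0∞} (hf : ∀ u, f u ≠ ⊤) {b : V}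
    (harm : ∀ u, u ≠ b → f u = (G.degree u : ℝ≥0∞)⁻¹ * ∑ w ∈ G.neighborFinset u, f w)
    (u : V) : f b ≤ f u := by
  have : Nonempty V := ⟨b⟩
  obtain ⟨x, hx⟩ := Finite.exists_min f
  obtain ⟨p⟩ := hG.preconnected x b
  refine le_trans ?_ (hx u)
  induction p with
  | nil => exact le_rfl
  | @cons x y c hxy p ih =>
    by_cases hxc : x = c
    · rw [hxc]
    · have hyx := hxy.apply_le_of_forall_le_of_harmonic (hf x) hx (harm x hxc)
      exact (ih harm fun z => hyx.trans (hx z)).trans hyx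

section FirstHit

variable {G : SimpleGraph V} [G.LocallyFinite] {a b : V}

theorem tsum_wgt_firstHit_eq_tsum_mul_tsum (hab : a ≠ b) :
    ∑' ω : {ω : G.Walk a b // b ∉ ω.support.dropLast}, wgt G ω.1 =
      (∑' σ : {σ : G.Walk a a // b ∉ σ.support}, wgt G σ.1) *
      ∑' τ : {τ : G.Walk a b // a ∉ τ.support.tail ∧ b ∉ τ.support.dropLast}, wgt G τ.1 := by
  let Φ : {σ : G.Walk a a // b ∉ σ.support} ×
      {τ : G.Walk a b // a ∉ τ.support.tail ∧ b ∉ τ.support.dropLast} →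
      {ω : G.Walk a b // b ∉ ω.support.dropLast} := fun p =>
    ⟨p.1.1.append p.2.1,
      (Walk.notMem_dropLast_support_append_iff _ _ hab.symm).2 ⟨p.1.2, p.2.2.2⟩⟩
  have hΦ : Function.Bijective Φ := by
    refine ⟨fun p q h => ?_, fun ω => ?_⟩
    · obtain ⟨h₁, h₂⟩ :=
        Walk.append_inj_of_notMem_support_tail p.2.2.1 q.2.2.1 (congrArg Subtype.val h)
      exact Prod.ext (Subtype.ext h₁) (Subtype.ext h₂)
    · obtain ⟨σ, τ, hτ, hω⟩ := ω.1.exists_append_notMem_support_tail ω.1.start_mem_support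
      obtain ⟨hσ, hτ'⟩ := (Walk.notMem_dropLast_support_append_iff σ τ hab.symm).1 (hω ▸ ω.2)
      exact ⟨(⟨σ, hσ⟩, ⟨τ, hτ, hτ'⟩), Subtype.ext hω⟩
  rw [← ENNReal.tsum_mul_right]
  simp_rw [← ENNReal.tsum_mul_left]
  rw [← ENNReal.tsum_prod, ← (Equiv.ofBijective Φ hΦ).tsum_eq]
  exact tsum_congr fun p => wgt_append p.1.1 p.2.1

/-- The probability that simple random walk started at `u` reaches `b` within `N` steps. -/
noncomputable def firstHitMass (G : SimpleGraph V) [G.LocallyFinite] (b : V) (N : ℕ∞) (u : V) :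
    ℝ≥0∞ :=
  ∑' ω : {ω : G.Walk u b // b ∉ ω.support.dropLast ∧ (ω.length : ℕ∞) ≤ N}, wgt G ω.1

lemma firstHitMass_self (N : ℕ∞) : firstHitMass G b N b = 1 := by
  rw [firstHitMass, tsum_eq_single ⟨Walk.nil, by simp⟩ fun ω hω => (hω (Subtype.ext ?_)).elim,
    wgt_nil]
  obtain ⟨ω, hω, -⟩ := ω
  cases ω with
  | nil => rfl
  | cons h p => exact (hω (by rw [Walk.dropLast_support_cons]; exact List.mem_cons_self)).elim

lemma firstHitMass_add_one {u : V} (hu : u ≠ b) (N : ℕ∞) :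
    firstHitMass G b (N + 1) u =
      (G.degree u : ℝ≥0∞)⁻¹ * ∑ w ∈ G.neighborFinset u, firstHitMass G b N w := by
  have hcons : ∀ {w : V} (h : G.Adj u w) (p : G.Walk w b),
      b ∉ (p.cons h).support.dropLast ∧ ((p.cons h).length : ℕ∞) ≤ N + 1 ↔
        b ∉ p.support.dropLast ∧ (p.length : ℕ∞) ≤ N := fun h p => by
    rw [Walk.dropLast_support_cons, Walk.length_cons, Nat.cast_succ,
      ENat.add_le_add_iff_right ENat.one_ne_top, List.mem_cons, not_or]
    exact and_congr_left' (and_iff_right hu.symm)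
  let Φ : (Σ w : G.neighborFinset u,
      {ω : G.Walk w b // b ∉ ω.support.dropLast ∧ (ω.length : ℕ∞) ≤ N}) →
      {ω : G.Walk u b // b ∉ ω.support.dropLast ∧ (ω.length : ℕ∞) ≤ N + 1} := fun p =>
    ⟨p.2.1.cons ((G.mem_neighborFinset u p.1).1 p.1.2), (hcons _ _).2 p.2.2⟩
  have hΦ : Function.Bijective Φ := by
    refine ⟨?_, ?_⟩
    · rintro ⟨⟨w, hw⟩, ω, hω⟩ ⟨⟨w', hw'⟩, ω', hω'⟩ h
      simp only [Φ, Subtype.mk.injEq, Walk.cons.injEq] at h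
      obtain ⟨rfl, h⟩ := h
      cases h
      rfl
    · rintro ⟨ω, hω⟩
      cases ω with
      | nil => exact absurd rfl hu
      | cons h p => exact ⟨⟨⟨_, (G.mem_neighborFinset _ _).2 h⟩, p, (hcons h p).1 hω⟩, rfl⟩
  rw [firstHitMass, ← (Equiv.ofBijective Φ hΦ).tsum_eq, ENNReal.tsum_sigma', tsum_fintype]
  simp only [Φ, Equiv.ofBijective_apply, wgt_cons, ENNReal.tsum_mul_left, ← Finset.mul_sum]
  rw [← Finset.sum_coe_sort (G.neighborFinset u)]
  rfl

lemma firstHitMass_le_one (N : ℕ) (u : V) : firstHitMass G b N u ≤ 1 := by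
  by_cases hu : u = b
  · rw [hu, firstHitMass_self]
  induction N generalizing u with
  | zero =>
    have : IsEmpty {ω : G.Walk u b // b ∉ ω.support.dropLast ∧ (ω.length : ℕ∞) ≤ (0 : ℕ)} :=
      ⟨fun ω => hu (Walk.eq_of_length_eq_zero (by exact_mod_cast nonpos_iff_eq_zero.1 ω.2.2))⟩
    rw [firstHitMass, tsum_empty]
    exact zero_le_one
  | succ N ih =>
    rw [Nat.cast_succ, firstHitMass_add_one hu]
    calc (G.degree u : ℝ≥0∞)⁻¹ * ∑ w ∈ G.neighborFinset u, firstHitMass G b N w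
        ≤ (G.degree u : ℝ≥0∞)⁻¹ * ∑ _w ∈ G.neighborFinset u, 1 := by
          gcongr with w
          by_cases hw : w = b
          · rw [hw, firstHitMass_self]
          · exact ih w hw
      _ ≤ 1 := by
        rw [Finset.sum_const, card_neighborFinset_eq_degree, nsmul_one]
        exact ENNReal.inv_mul_le_one _

lemma firstHitMass_top_le_one (u : V) : firstHitMass G b ⊤ u ≤ 1 := by
  rw [firstHitMass, ENNReal.tsum_eq_iSup_sum]
  refine iSup_le fun s => ?_
  let N := s.sup fun ω => ω.1.length
  let ι : s → {ω : G.Walk u b // b ∉ ω.support.dropLast ∧ (ω.length : ℕ∞) ≤ (N : ℕ)} :=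
    fun ω => ⟨ω.1.1, ω.1.2.1, by exact_mod_cast Finset.le_sup (f := fun ω => ω.1.length) ω.2⟩
  have hι : Function.Injective ι := fun ω ω' h =>
    Subtype.ext (Subtype.ext (congrArg Subtype.val h :))
  calc ∑ ω ∈ s, wgt G ω.1 = ∑' ω : s, wgt G (ι ω).1 := (Finset.tsum_subtype s _).symm
    _ ≤ firstHitMass G b N u := ENNReal.tsum_comp_le_tsum_of_injective hι _
    _ ≤ 1 := firstHitMass_le_one N u

lemma firstHitMass_top_eq_one [Fintype V] (hG : G.Connected) (u : V) :
    firstHitMass G b ⊤ u = 1 := by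
  refine le_antisymm (firstHitMass_top_le_one u) ?_
  rw [← firstHitMass_self (G := G) (b := b) ⊤]
  refine hG.apply_le_of_harmonic_off (fun u => ne_top_of_le_ne_top ENNReal.one_ne_top
    (firstHitMass_top_le_one u)) (fun u hu => ?_) u
  simpa using firstHitMass_add_one hu ⊤

theorem tsum_wgt_avoiding_mul_tsum_wgt_excursion [Fintype V] (hG : G.Connected) (hab : a ≠ b) :
    (∑' σ : {σ : G.Walk a a // b ∉ σ.support}, wgt G σ.1) *
      ∑' τ : {τ : G.Walk a b // a ∉ τ.support.tail ∧ b ∉ τ.support.dropLast}, wgt G τ.1 = 1 := by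
  rw [← tsum_wgt_firstHit_eq_tsum_mul_tsum hab, ← firstHitMass_top_eq_one hG a]
  exact ((Equiv.subtypeEquivRight fun ω => and_iff_left le_top).tsum_eq fun ω => wgt G ω.1).symm

end FirstHit

/-- In a finite connected graph, the effective conductance `C` between distinct vertices
`v₀, v₁` and the quantity `R = ∑_{ω : v₀ → v₀, v₁ ∉ ω} σ_{v₀}⁻¹ p_H(ω)` are both finite
and satisfy `C * R = 1`. -/
theorem conductance_resistance_product [Fintype V] (H : SimpleGraph V) [H.LocallyFinite]
    (hH : H.Connected) (v₀ v₁ : V) (hne : v₀ ≠ v₁)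
    (C R : ℝ≥0∞)
    (hC : C = ∑' ω : {ω : H.Walk v₀ v₁ //
        1 ≤ ω.length ∧ ∀ x ∈ ω.support.tail.dropLast, x ≠ v₀ ∧ x ≠ v₁},
      (H.degree v₀ : ℝ≥0∞) * wgt H ω.1)
    (hR : R = ∑' ω : {ω : H.Walk v₀ v₀ // v₁ ∉ ω.support},
      ((H.degree v₀ : ℝ≥0∞))⁻¹ * wgt H ω.1) :
    C ≠ ⊤ ∧ R ≠ ⊤ ∧ C * R = 1 := by
  set A := ∑' τ : {τ : H.Walk v₀ v₁ // v₀ ∉ τ.support.tail ∧ v₁ ∉ τ.support.dropLast}, wgt H τ.1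
  set B := ∑' σ : {σ : H.Walk v₀ v₀ // v₁ ∉ σ.support}, wgt H σ.1
  have hBA : B * A = 1 := tsum_wgt_avoiding_mul_tsum_wgt_excursion hH hne
  have hCA : C = H.degree v₀ * A := by
    rw [hC, ENNReal.tsum_mul_left]
    exact congrArg _ ((Equiv.subtypeEquivRight fun τ =>
      (Walk.notMem_support_tail_and_dropLast_iff hne τ).symm).tsum_eq fun τ => wgt H τ.1)
  have hRB : R = (H.degree v₀ : ℝ≥0∞)⁻¹ * B := by rw [hR, ENNReal.tsum_mul_left]
  have : Nontrivial V := ⟨⟨v₀, v₁, hne⟩⟩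
  have hdeg : (H.degree v₀ : ℝ≥0∞) ≠ 0 := by
    exact_mod_cast (hH.preconnected.degree_pos_of_nontrivial v₀).ne'
  have hA : A ≠ ⊤ := fun h => by simp [h, left_ne_zero_of_mul_eq_one hBA] at hBA
  have hB : B ≠ ⊤ := fun h => by simp [h, right_ne_zero_of_mul_eq_one hBA] at hBA
  refine ⟨hCA ▸ ENNReal.mul_ne_top (ENNReal.natCast_ne_top _) hA,
    hRB ▸ ENNReal.mul_ne_top (ENNReal.inv_ne_top.2 hdeg) hB, ?_⟩
  rw [hCA, hRB, mul_mul_mul_comm, ENNReal.mul_inv_cancel hdeg (ENNReal.natCast_ne_top _), one_mul,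
    mul_comm, hBA]
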